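/- arXiv:math/0610813 — 4 statements merged into one kernel-verified Lean document; each statement's English description precedes it below -/
import Mathlib

section
/- Let C ⊆ (S^{n-1})^m be finite such that for all distinct u, v in C, (1/m)∑_{i=1}^m ⟨u_i, v_i⟩ ≤ t with t < 1/(mn). Then |C| ≤ 2mn(1-t)/(1 - mnt). -/
/-!
Rescaling by `1/√m`, a tuple `u` becomes a unit vector of `ℝ^{mn}` and the angular cosine becomes
the inner product, so it suffices to bound `N` unit vectors of a `d`-dimensional space whose pairwise
inner products `g` are at most `t < 1/d`. The frame operator `∑ x xᵀ` has trace `N` and squared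
Frobenius norm `∑ g²`, so Cauchy–Schwarz on its diagonal gives `N² ≤ d ∑ g²`. Off the diagonal
`-1 ≤ g ≤ t` gives `g² ≤ (t - 1) g + t`, and `∑ g = ‖∑ x‖² ≥ 0` bounds the off-diagonal sum of
`g` below by `-N`; together `N (1 - d t) ≤ 2 d (1 - t)`.
-/

open Finset Module
open scoped RealInnerProductSpace Matrix

theorem sq_sum_dotProduct_self_le {ι κ : Type*} [Fintype κ] (s : Finset ι) (x : ι → κ → ℝ) :
    (∑ i ∈ s, x i ⬝ᵥ x i) ^ 2 ≤ Fintype.card κ * ∑ i ∈ s, ∑ j ∈ s, (x i ⬝ᵥ x j) ^ 2 := by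
  set M : κ → κ → ℝ := fun p q => ∑ i ∈ s, x i p * x i q
  have trace_eq : ∑ i ∈ s, x i ⬝ᵥ x i = ∑ p, M p p := by
    simp only [dotProduct, M]; exact sum_comm
  have frobenius_eq : ∑ i ∈ s, ∑ j ∈ s, (x i ⬝ᵥ x j) ^ 2 = ∑ p, ∑ q, M p q ^ 2 := by
    simp only [dotProduct, M, sq, sum_mul_sum, mul_mul_mul_comm]
    simp_rw [sum_comm (s := s) (t := (univ : Finset κ))]
  calc (∑ i ∈ s, x i ⬝ᵥ x i) ^ 2 = (∑ p, M p p) ^ 2 := by rw [trace_eq]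
    _ ≤ Fintype.card κ * ∑ p, M p p ^ 2 := sq_sum_le_card_mul_sum_sq
    _ ≤ Fintype.card κ * ∑ p, ∑ q, M p q ^ 2 := by
      gcongr with p
      exact single_le_sum (f := fun q => M p q ^ 2) (fun q _ => sq_nonneg _) (mem_univ p)
    _ = _ := by rw [frobenius_eq]

theorem Finset.sum_sum_eq_sum_add_sum_offDiag {α M : Type*} [DecidableEq α] [AddCommMonoid M]
    (s : Finset α) (f : α → α → M) :
    ∑ x ∈ s, ∑ y ∈ s, f x y = ∑ x ∈ s, f x x + ∑ p ∈ s.offDiag, f p.1 p.2 := by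
  rw [← sum_product', ← diag_union_offDiag, sum_union (disjoint_diag_offDiag _), sum_diag]

section InnerProductSpace

variable {E : Type*} [NormedAddCommGroup E] [InnerProductSpace ℝ E]

theorem sq_sum_norm_sq_le_finrank_mul_sum_sum_inner_sq [FiniteDimensional ℝ E] {ι : Type*}
    (s : Finset ι) (x : ι → E) :
    (∑ i ∈ s, ‖x i‖ ^ 2) ^ 2 ≤ finrank ℝ E * ∑ i ∈ s, ∑ j ∈ s, ⟪x i, x j⟫ ^ 2 := by
  let b := stdOrthonormalBasis ℝ E
  have coords : ∀ i j, ⟪x i, x j⟫ = (fun p => ⟪b p, x i⟫) ⬝ᵥ (fun p => ⟪b p, x j⟫) := by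
    intro i j
    rw [← b.sum_inner_mul_inner]
    exact sum_congr rfl fun p _ => by rw [real_inner_comm]
  have norms : ∀ i, ‖x i‖ ^ 2 = (fun p => ⟪b p, x i⟫) ⬝ᵥ (fun p => ⟪b p, x i⟫) := by
    intro i; rw [← real_inner_self_eq_norm_sq, coords]
  simpa [norms, coords] using sq_sum_dotProduct_self_le s fun i p => ⟪b p, x i⟫

theorem sum_sum_real_inner_nonneg {ι : Type*} (s : Finset ι) (x : ι → E) :
    0 ≤ ∑ i ∈ s, ∑ j ∈ s, ⟪x i, x j⟫ := by
  have := real_inner_self_nonneg (x := ∑ i ∈ s, x i)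
  simp only [sum_inner, inner_sum] at this
  rwa [sum_comm] at this

theorem real_inner_sq_le_of_norm_eq_one {x y : E} {t : ℝ} (hx : ‖x‖ = 1) (hy : ‖y‖ = 1)
    (h : ⟪x, y⟫ ≤ t) : ⟪x, y⟫ ^ 2 ≤ (t - 1) * ⟪x, y⟫ + t := by
  nlinarith [neg_one_le_real_inner_of_norm_eq_one hx hy]

theorem neg_card_le_sum_offDiag_real_inner (s : Finset E) (hs : ∀ x ∈ s, ‖x‖ = 1) :
    -(#s : ℝ) ≤ ∑ p ∈ s.offDiag, ⟪p.1, p.2⟫ := by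
  classical
  have hself : ∀ x ∈ s, ⟪x, x⟫ = 1 := fun x hx => by
    rw [real_inner_self_eq_norm_sq, hs x hx, one_pow]
  have := sum_sum_real_inner_nonneg s id
  simp only [id] at this
  rw [sum_sum_eq_sum_add_sum_offDiag, sum_congr rfl hself, sum_const, nsmul_one] at this
  linarith

theorem sum_offDiag_real_inner_sq_le (s : Finset E) {t : ℝ} (hs : ∀ x ∈ s, ‖x‖ = 1)
    (hst : ∀ x ∈ s, ∀ y ∈ s, x ≠ y → ⟪x, y⟫ ≤ t) :
    ∑ p ∈ s.offDiag, ⟪p.1, p.2⟫ ^ 2 ≤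
      (t - 1) * ∑ p ∈ s.offDiag, ⟪p.1, p.2⟫ + t * ((#s : ℝ) ^ 2 - #s) := by
  classical
  have hcard : (#s.offDiag : ℝ) = (#s : ℝ) ^ 2 - #s := by
    rw [offDiag_card, Nat.cast_sub (Nat.le_mul_self _)]
    push_cast
    ring
  calc _ ≤ ∑ p ∈ s.offDiag, ((t - 1) * ⟪p.1, p.2⟫ + t) := sum_le_sum fun p hp => by
          obtain ⟨h1, h2, hne⟩ := mem_offDiag.mp hp
          exact real_inner_sq_le_of_norm_eq_one (hs _ h1) (hs _ h2) (hst _ h1 _ h2 hne)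
    _ = _ := by rw [sum_add_distrib, ← mul_sum, sum_const, nsmul_eq_mul, hcard, mul_comm _ t]

theorem card_le_of_forall_real_inner_le [FiniteDimensional ℝ E] (s : Finset E) {t : ℝ}
    (ht : t < 1 / finrank ℝ E) (hs : ∀ x ∈ s, ‖x‖ = 1)
    (hst : ∀ x ∈ s, ∀ y ∈ s, x ≠ y → ⟪x, y⟫ ≤ t) :
    (#s : ℝ) ≤ 2 * finrank ℝ E * (1 - t) / (1 - finrank ℝ E * t) := by
  classical
  set d : ℝ := (finrank ℝ E : ℝ)
  set N : ℝ := (#s : ℝ)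
  have hd : 0 ≤ d := Nat.cast_nonneg _
  have ht_one : t < 1 := ht.trans_le (by simpa using Nat.cast_inv_le_one (finrank ℝ E))
  have hdt : 0 < 1 - d * t := by
    rcases hd.eq_or_lt with hd | hd
    · simp [← hd]
    · linarith [(lt_div_iff₀' hd).mp ht]
  have hgram : N ^ 2 ≤ d * (N + ∑ p ∈ s.offDiag, ⟪p.1, p.2⟫ ^ 2) := by
    have hself_sq : ∀ x ∈ s, ⟪x, x⟫ ^ 2 = 1 := fun x hx => by
      rw [real_inner_self_eq_norm_sq, hs x hx, one_pow, one_pow]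
    have hnorm_sq : ∀ x ∈ s, ‖x‖ ^ 2 = 1 := fun x hx => by rw [hs x hx, one_pow]
    have := sq_sum_norm_sq_le_finrank_mul_sum_sum_inner_sq s id
    simp only [id] at this
    rwa [sum_sum_eq_sum_add_sum_offDiag, sum_congr rfl hnorm_sq, sum_congr rfl hself_sq,
      sum_const, nsmul_one] at this
  have hG := neg_card_le_sum_offDiag_real_inner s hs
  have key : N * (N * (1 - d * t)) ≤ N * (2 * d * (1 - t)) := by
    nlinarith [mul_le_mul_of_nonneg_left (sum_offDiag_real_inner_sq_le s hs hst) hd,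
      mul_le_mul_of_nonneg_left (mul_le_mul_of_nonpos_left hG (by linarith : t - 1 ≤ 0)) hd]
  rw [le_div_iff₀ hdt]
  rcases (by positivity : (0 : ℝ) ≤ N).eq_or_lt with hN | hN
  · rw [← hN]; nlinarith
  · exact le_of_mul_le_mul_left key hN

end InnerProductSpace

theorem stmt7_general (m n : ℕ) (hm : 0 < m) (t : ℝ)
    (ht : t < 1 / ((m : ℝ) * n))
    (C : Finset (Fin m → EuclideanSpace ℝ (Fin n)))
    (hunit : ∀ u ∈ C, ∀ i, ‖u i‖ = 1)
    (hang : ∀ u ∈ C, ∀ v ∈ C, u ≠ v →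
      (1 / (m : ℝ)) * ∑ i, (inner ℝ (u i) (v i) : ℝ) ≤ t) :
    (C.card : ℝ) ≤ 2 * m * n * (1 - t) / (1 - m * n * t) := by
  let f (u : Fin m → EuclideanSpace ℝ (Fin n)) : PiLp 2 fun _ : Fin m => EuclideanSpace ℝ (Fin n) :=
    (√m)⁻¹ • WithLp.toLp 2 u
  have hfinrank : (finrank ℝ (PiLp 2 fun _ : Fin m => EuclideanSpace ℝ (Fin n)) : ℝ) = m * n := by
    rw [LinearEquiv.finrank_eq (WithLp.linearEquiv 2 ℝ (Fin m → EuclideanSpace ℝ (Fin n))),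
      finrank_pi_fintype]
    simp
  have hf_inner (u v) : ⟪f u, f v⟫ = 1 / m * ∑ i, ⟪u i, v i⟫ := by
    rw [real_inner_smul_left, real_inner_smul_right, PiLp.inner_apply, ← mul_assoc, ← mul_inv,
      Real.mul_self_sqrt m.cast_nonneg, one_div]
  have hf_norm : ∀ u ∈ C, ‖f u‖ = 1 := fun u hu => by
    have : ‖f u‖ ^ 2 = 1 := by
      rw [← real_inner_self_eq_norm_sq, hf_inner]
      simp [hunit u hu, hm.ne']
    exact (pow_eq_one_iff_of_nonneg (norm_nonneg _) two_ne_zero).mp this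
  have hf_inj : Function.Injective f :=
    (smul_right_injective _ (by positivity)).comp (WithLp.toLp_injective 2)
  have := card_le_of_forall_real_inner_le (C.image f) (t := t) (by rwa [hfinrank])
    (by simpa using hf_norm) (by
      simp only [forall_mem_image, hf_inner]
      exact fun u hu v hv huv => hang u hu v hv fun h => huv (h ▸ rfl))
  rwa [card_image_of_injective _ hf_inj, hfinrank, ← mul_assoc] at this

/-- Degree-2 LP bound on `(S^{n-1})^m`: if all distinct pairs of a finite
`C ⊆ (S^{n-1})^m` satisfy `(1/m) ∑ᵢ ⟨uᵢ, vᵢ⟩ ≤ t` with `t < 1/(mn)`, then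
`|C| ≤ 2mn(1-t)/(1 - mnt)`. -/
theorem stmt7 (m n : ℕ) (hm : 0 < m) (hn : 2 ≤ n) (t : ℝ)
    (ht : t < 1 / ((m : ℝ) * n))
    (C : Finset (Fin m → EuclideanSpace ℝ (Fin n)))
    (hunit : ∀ u ∈ C, ∀ i, ‖u i‖ = 1)
    (hang : ∀ u ∈ C, ∀ v ∈ C, u ≠ v →
      (1 / (m : ℝ)) * ∑ i, (inner ℝ (u i) (v i) : ℝ) ≤ t) :
    (C.card : ℝ) ≤ 2 * m * n * (1 - t) / (1 - m * n * t) :=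
  stmt7_general m n hm t ht C hunit hang
end

section
/- Let C be a finite set of m-dimensional subspaces of ℝ^n such that for all distinct p, q ∈ C, trace(π_p π_q) ≤ s where π_p denotes the orthogonal projection onto p. Then one can pick orthonormal bases so that the associated unit vectors in ℝ^{mn} (concatenation divided by √m) form a spherical code in S^{mn-1} with pairwise inner products at most √(s/m); consequently any upper bound on spherical codes in S^{mn-1} with minimum cosine √(s/m) bounds |C|. -/
/-!
Write `P_p` for the orthogonal projection onto `p` and let `(e_i)`, `(f_i)` be orthonormal bases
of `p` and `q`. Then `⟪β p, β q⟫ = (1/m) ∑ᵢ ⟪e_i, f_i⟫`, while computing the trace in the basis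
`(e_i)` gives `σ(p, q) = ∑ᵢ ‖P_q e_i‖² ≥ ∑ᵢ ⟪e_i, f_i⟫²` because `f_i ∈ q` is a unit vector.
Cauchy–Schwarz, `(∑ᵢ aᵢ)² ≤ m ∑ᵢ aᵢ²`, turns this into `⟪β p, β q⟫ ≤ √(σ(p, q)/m)`.
Since each `β p` determines its basis and hence `p`, the vectors `β p` form a spherical code of
size `|C|`.
-/

open Finset
open scoped InnerProductSpace

section Projection

variable {𝕜 E ι : Type*} [RCLike 𝕜] [NormedAddCommGroup E] [InnerProductSpace 𝕜 E] [Fintype ι]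

theorem OrthonormalBasis.span_range_coe {K : Submodule 𝕜 E} (b : OrthonormalBasis ι 𝕜 K) :
    Submodule.span 𝕜 (Set.range fun i => (b i : E)) = K := by
  rw [show (fun i => (b i : E)) = K.subtype ∘ b from rfl, Set.range_comp, Submodule.span_image,
    ← b.coe_toBasis, b.toBasis.span_eq, Submodule.map_top, Submodule.range_subtype]

theorem Submodule.norm_inner_le_norm_mul_norm_starProjection {K : Submodule 𝕜 E}
    [K.HasOrthogonalProjection] {c : E} (hc : c ∈ K) (x : E) :
    ‖⟪c, x⟫_𝕜‖ ≤ ‖c‖ * ‖K.starProjection x‖ := by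
  rw [← K.starProjection_eq_self_iff.mpr hc, K.inner_starProjection_left_eq_right,
    K.starProjection_eq_self_iff.mpr hc]
  exact norm_inner_le_norm c _

theorem LinearMap.trace_starProjection_comp [FiniteDimensional 𝕜 E]
    {K : Submodule 𝕜 E} (b : OrthonormalBasis ι 𝕜 K) (T : E →ₗ[𝕜] E) :
    LinearMap.trace 𝕜 E (K.starProjection.toLinearMap ∘ₗ T) = ∑ i, ⟪(b i : E), T (b i)⟫_𝕜 := by
  have hcomp : K.starProjection.toLinearMap ∘ₗ T
      = K.subtype ∘ₗ (K.orthogonalProjectionOnto.toLinearMap ∘ₗ T) := rfl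
  rw [hcomp, LinearMap.trace_comp_comm', LinearMap.trace_eq_sum_inner _ b]
  simp

end Projection

theorem sq_sum_inner_le_card_mul_trace {E ι : Type*} [NormedAddCommGroup E]
    [InnerProductSpace ℝ E] [FiniteDimensional ℝ E] [Fintype ι] {K L : Submodule ℝ E}
    (b : OrthonormalBasis ι ℝ K) (c : OrthonormalBasis ι ℝ L) :
    (∑ i, ⟪(b i : E), (c i : E)⟫_ℝ) ^ 2 ≤
      Fintype.card ι * LinearMap.trace ℝ E (K.starProjection.toLinearMap ∘ₗ L.starProjection) := by
  have hterm : ∀ i, ⟪(b i : E), (c i : E)⟫_ℝ ^ 2 ≤ ⟪(b i : E), L.starProjection (b i)⟫_ℝ := by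
    intro i
    have hbound := L.norm_inner_le_norm_mul_norm_starProjection (c i).2 (b i : E)
    rw [Submodule.norm_coe, c.norm_eq_one i, one_mul, Real.norm_eq_abs, real_inner_comm]
      at hbound
    have hsq := L.re_inner_starProjection_eq_normSq (b i : E)
    rw [RCLike.re_to_real, real_inner_comm, ← Submodule.norm_coe] at hsq
    rw [hsq, ← sq_abs]
    exact pow_le_pow_left₀ (abs_nonneg _) hbound 2
  calc (∑ i, ⟪(b i : E), (c i : E)⟫_ℝ) ^ 2
      ≤ Fintype.card ι * ∑ i, ⟪(b i : E), (c i : E)⟫_ℝ ^ 2 := sq_sum_le_card_mul_sum_sq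
    _ ≤ Fintype.card ι * ∑ i, ⟪(b i : E), L.starProjection (b i)⟫_ℝ := by
      gcongr with i
      exact hterm i
    _ = _ := by rw [LinearMap.trace_starProjection_comp b]; rfl

theorem div_le_sqrt_div_of_sq_le_mul {x t m : ℝ} (hm : 0 < m) (h : x ^ 2 ≤ m * t) :
    x / m ≤ √(t / m) := by
  apply Real.le_sqrt_of_sq_le
  rw [div_pow, div_le_div_iff₀ (by positivity) hm]
  nlinarith

section FrameVector

variable {ι κ : Type*}

/-- The vector `β` of the paper, built from the frame `e`. -/
noncomputable def frameVector [Fintype ι] (e : ι → EuclideanSpace ℝ κ) :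
    EuclideanSpace ℝ (ι × κ) :=
  (√(Fintype.card ι))⁻¹ • WithLp.toLp 2 fun ik => e ik.1 ik.2

variable [Fintype ι]

theorem frameVector_apply (e : ι → EuclideanSpace ℝ κ) (i : ι) (k : κ) :
    frameVector e (i, k) = e i k / √(Fintype.card ι) := by
  simp [frameVector, div_eq_inv_mul]

theorem frameVector_injective [Nonempty ι] : Function.Injective (frameVector (ι := ι) (κ := κ)) :=
  fun e f h => funext fun i => by
    ext k
    have hik := congrArg (· (i, k)) h
    simpa [frameVector_apply, Fintype.card_ne_zero] using hik

variable [Fintype κ]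

theorem inner_frameVector (e f : ι → EuclideanSpace ℝ κ) :
    ⟪frameVector e, frameVector f⟫_ℝ = (∑ i, ⟪e i, f i⟫_ℝ) / Fintype.card ι := by
  rw [frameVector, frameVector, real_inner_smul_left, real_inner_smul_right, ← mul_assoc,
    ← mul_inv, Real.mul_self_sqrt (Nat.cast_nonneg _), inv_mul_eq_div]
  simp only [PiLp.inner_apply, Fintype.sum_prod_type]

theorem norm_frameVector [Nonempty ι] {e : ι → EuclideanSpace ℝ κ} (he : Orthonormal ℝ e) :
    ‖frameVector e‖ = 1 := by
  rw [norm_eq_sqrt_real_inner, inner_frameVector]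
  simp [he.1]

theorem inner_frameVector_le_sqrt_trace {K L : Submodule ℝ (EuclideanSpace ℝ κ)} [Nonempty ι]
    (b : OrthonormalBasis ι ℝ K) (c : OrthonormalBasis ι ℝ L) :
    ⟪frameVector fun i => (b i : EuclideanSpace ℝ κ), frameVector fun i => (c i : _)⟫_ℝ ≤
      √(LinearMap.trace ℝ _ (K.starProjection.toLinearMap ∘ₗ L.starProjection) /
        Fintype.card ι) := by
  rw [inner_frameVector]
  exact div_le_sqrt_div_of_sq_le_mul (by exact_mod_cast Fintype.card_pos)
    (sq_sum_inner_le_card_mul_trace b c)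

end FrameVector

theorem stmt8_general (m n : ℕ) (hm : 0 < m) (s : ℝ)
    (C : Finset (Submodule ℝ (EuclideanSpace ℝ (Fin n))))
    (hdim : ∀ p ∈ C, Module.finrank ℝ p = m)
    (hσ : ∀ p ∈ C, ∀ q ∈ C, p ≠ q →
      RCLike.re (LinearMap.trace ℝ (EuclideanSpace ℝ (Fin n))
        (((p.subtypeL ∘L p.orthogonalProjection).toLinearMap) ∘ₗ
          ((q.subtypeL ∘L q.orthogonalProjection).toLinearMap))) ≤ s) :
    ∃ β : Submodule ℝ (EuclideanSpace ℝ (Fin n)) → EuclideanSpace ℝ (Fin m × Fin n),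
      (∀ p ∈ C, ∃ e : Fin m → EuclideanSpace ℝ (Fin n),
        Orthonormal ℝ e ∧ (∀ i, e i ∈ p) ∧ (∀ i k, β p (i, k) = e i k / Real.sqrt m)) ∧
      (∀ p ∈ C, ‖β p‖ = 1) ∧
      (∀ p ∈ C, ∀ q ∈ C, p ≠ q → (inner ℝ (β p) (β q) : ℝ) ≤ Real.sqrt (s / m)) ∧
      (∀ M : ℕ,
        (∀ D : Finset (EuclideanSpace ℝ (Fin m × Fin n)),
          (∀ u ∈ D, ‖u‖ = 1) →
          (∀ u ∈ D, ∀ v ∈ D, u ≠ v → (inner ℝ u v : ℝ) ≤ Real.sqrt (s / m)) →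
          D.card ≤ M) →
        C.card ≤ M) := by
  classical
  have : NeZero m := ⟨hm.ne'⟩
  let b : ∀ p ∈ C, OrthonormalBasis (Fin m) ℝ p := fun p hp =>
    (stdOrthonormalBasis ℝ p).reindex (finCongr (hdim p hp))
  let e : Submodule ℝ (EuclideanSpace ℝ (Fin n)) → Fin m → EuclideanSpace ℝ (Fin n) :=
    fun p => if hp : p ∈ C then fun i => b p hp i else 0
  have he : ∀ p (hp : p ∈ C), e p = fun i => (b p hp i : EuclideanSpace ℝ (Fin n)) :=
    fun p hp => dif_pos hp
  have horth : ∀ p ∈ C, Orthonormal ℝ (e p) := fun p hp => by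
    rw [he p hp]
    exact (b p hp).orthonormal.comp_linearIsometry p.subtypeₗᵢ
  have hcode : ∀ p ∈ C, ∀ q ∈ C, p ≠ q → ⟪frameVector (e p), frameVector (e q)⟫_ℝ ≤ √(s / m) := by
    intro p hp q hq hpq
    have htrace : LinearMap.trace ℝ _ (p.starProjection.toLinearMap ∘ₗ q.starProjection) ≤ s :=
      hσ p hp q hq hpq
    rw [he p hp, he q hq]
    refine (inner_frameVector_le_sqrt_trace (b p hp) (b q hq)).trans ?_
    rw [Fintype.card_fin]
    gcongr
  have hinj : Set.InjOn (frameVector ∘ e) C := fun p hp q hq hpq => by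
    rw [← (b p hp).span_range_coe, ← (b q hq).span_range_coe, ← he p hp, ← he q hq,
      frameVector_injective hpq]
  refine ⟨frameVector ∘ e, fun p hp => ⟨e p, horth p hp, ?_, fun i k => ?_⟩,
    fun p hp => norm_frameVector (horth p hp), hcode, fun M hM => ?_⟩
  · simp [he p hp]
  · simp [frameVector_apply]
  · rw [← card_image_of_injOn hinj]
    refine hM _ (by simpa using fun p hp => norm_frameVector (horth p hp)) ?_
    simp only [forall_mem_image]
    exact fun p hp q hq hne => hcode p hp q hq (fun h => hne (h ▸ rfl))

/-- From a Grassmannian code `C` of `m`-dimensional subspaces of `ℝⁿ` with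
`trace(π_p π_q) ≤ s` for distinct `p, q`, one can pick orthonormal bases so that the
concatenated unit vectors (divided by `√m`) form a spherical code in `S^{mn-1}` with
pairwise inner products at most `√(s/m)`; consequently any bound on such spherical codes
bounds `|C|`. -/
theorem stmt8 (m n : ℕ) (hm : 0 < m) (s : ℝ) (hs : s < m)
    (C : Finset (Submodule ℝ (EuclideanSpace ℝ (Fin n))))
    (hdim : ∀ p ∈ C, Module.finrank ℝ p = m)
    (hσ : ∀ p ∈ C, ∀ q ∈ C, p ≠ q →
      RCLike.re (LinearMap.trace ℝ (EuclideanSpace ℝ (Fin n))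
        (((p.subtypeL ∘L p.orthogonalProjection).toLinearMap) ∘ₗ
          ((q.subtypeL ∘L q.orthogonalProjection).toLinearMap))) ≤ s) :
    ∃ β : Submodule ℝ (EuclideanSpace ℝ (Fin n)) → EuclideanSpace ℝ (Fin m × Fin n),
      (∀ p ∈ C, ∃ e : Fin m → EuclideanSpace ℝ (Fin n),
        Orthonormal ℝ e ∧ (∀ i, e i ∈ p) ∧ (∀ i k, β p (i, k) = e i k / Real.sqrt m)) ∧
      (∀ p ∈ C, ‖β p‖ = 1) ∧
      (∀ p ∈ C, ∀ q ∈ C, p ≠ q → (inner ℝ (β p) (β q) : ℝ) ≤ Real.sqrt (s / m)) ∧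
      (∀ M : ℕ,
        (∀ D : Finset (EuclideanSpace ℝ (Fin m × Fin n)),
          (∀ u ∈ D, ‖u‖ = 1) →
          (∀ u ∈ D, ∀ v ∈ D, u ≠ v → (inner ℝ u v : ℝ) ≤ Real.sqrt (s / m)) →
          D.card ≤ M) →
        C.card ≤ M) :=
  stmt8_general m n hm s C hdim hσ
end

section
/- In Proposition on the CD-kernel bound: with y ∈ ℝ^m satisfying P_i(y_t) ≥ 0 for 0 ≤ i ≤ k_t and P_{k_t+1}(y_t) ≤ 0 for all t, the inner product of F(x) := K_k(x,y) N_k(x,y) with the constant 1 (under the product orthogonality measure) equals f_0 = ∑_{t=1}^m d_{k_t} a_{k_t} (−P_{k_t}(y_t) P_{k_t+1}(y_t)) ∏_{j≠t} ∑_{i=0}^{k_j} d_i P_i(y_j)², where K_k and N_k are the product Christoffel–Darboux kernel and its numerator. -/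
/-!
Write `K_j(x) = ∑_{i ≤ k_j} d_i P_i(x) P_i(y_j)` for the one-variable Christoffel–Darboux kernel
and `D_t(x) = P_{k_t+1}(x) P_{k_t}(y_t) - P_{k_t}(x) P_{k_t+1}(y_t)` for the numerator factor.
The integrand expands as `∑_t d_{k_t} a_{k_t} (K_t D_t)(x_t) ∏_{j ≠ t} K_j(x_j)²`, and each term
integrates coordinatewise by Fubini. Orthogonality gives the reproducing property
`∫ K_j P_l = P_l(y_j)` for `l ≤ k_j` and `0` for `l > k_j`, hence `∫ K_j² = ∑_{i ≤ k_j} d_i P_i(y_j)²`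
and `∫ K_t D_t = -P_{k_t}(y_t) P_{k_t+1}(y_t)`.
-/

open MeasureTheory Finset

theorem Finset.prod_ite_eq_mul_prod_erase {ι M : Type*} [Fintype ι] [DecidableEq ι]
    [CommMonoid M] (t : ι) (a b : ι → M) :
    ∏ j, (if j = t then a j else b j) = a t * ∏ j ∈ univ.erase t, b j := by
  rw [← mul_prod_erase _ _ (mem_univ t), if_pos rfl]
  exact congrArg _ (prod_congr rfl fun j hj => if_neg (ne_of_mem_erase hj))

theorem integral_prod_mul_sum_mul_prod_erase {ι α : Type*} [Fintype ι] [DecidableEq ι]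
    [MeasurableSpace α] (μ : Measure α) [SigmaFinite μ] (f g : ι → α → ℝ) (c : ι → ℝ)
    (hff : ∀ j, Integrable (fun z => f j z * f j z) μ)
    (hfg : ∀ j, Integrable (fun z => f j z * g j z) μ) :
    ∫ x : ι → α, (∏ j, f j (x j)) * ∑ t, c t * g t (x t) * ∏ j ∈ univ.erase t, f j (x j)
        ∂(Measure.pi fun _ => μ) =
      ∑ t, c t * (∫ z, f t z * g t z ∂μ) * ∏ j ∈ univ.erase t, ∫ z, f j z * f j z ∂μ := by
  set F : ι → ι → α → ℝ := fun t j z => if j = t then f j z * g j z else f j z * f j z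
  have hexpand : ∀ x : ι → α,
      (∏ j, f j (x j)) * ∑ t, c t * g t (x t) * ∏ j ∈ univ.erase t, f j (x j) =
        ∑ t, c t * ∏ j, F t j (x j) := by
    intro x
    rw [mul_sum]
    refine sum_congr rfl fun t _ => ?_
    rw [prod_ite_eq_mul_prod_erase, ← mul_prod_erase _ _ (mem_univ t), prod_mul_distrib]
    ring
  have hF : ∀ t j, Integrable (F t j) μ := fun t j => by
    by_cases h : j = t
    · simpa [F, h] using hfg t
    · simpa [F, h] using hff j
  simp_rw [hexpand]
  rw [integral_finsetSum _ fun t _ => (Integrable.fintype_prod (hF t)).const_mul _]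
  refine sum_congr rfl fun t _ => ?_
  rw [integral_const_mul, integral_fintype_prod_eq_prod (F t), mul_assoc,
    ← prod_ite_eq_mul_prod_erase t (fun j => ∫ z, f j z * g j z ∂μ)
      (fun j => ∫ z, f j z * f j z ∂μ)]
  exact congrArg _ (prod_congr rfl fun j _ => by split_ifs <;> simp [F, *])

def cdKernel (P : ℕ → ℝ → ℝ) (d : ℕ → ℝ) (k : ℕ) (y x : ℝ) : ℝ :=
  ∑ i ∈ range (k + 1), d i * P i x * P i y

def cdNumerator (P : ℕ → ℝ → ℝ) (k : ℕ) (y x : ℝ) : ℝ :=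
  P (k + 1) x * P k y - P k x * P (k + 1) y

section Orthogonal

variable {μ : Measure ℝ} {P : ℕ → ℝ → ℝ} {d : ℕ → ℝ}

theorem cdKernel_mul (k : ℕ) (y x g : ℝ) :
    cdKernel P d k y x * g = ∑ i ∈ range (k + 1), d i * P i y * (P i x * g) := by
  rw [cdKernel, sum_mul]
  exact sum_congr rfl fun i _ => by ring

theorem integrable_cdKernel_mul (hint : ∀ k l, Integrable (fun x => P k x * P l x) μ)
    (k l : ℕ) (y : ℝ) : Integrable (fun x => cdKernel P d k y x * P l x) μ := by
  simp_rw [cdKernel_mul]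
  exact integrable_finsetSum _ fun i _ => (hint i l).const_mul _

/-- The reproducing property; the factor `d l * (d l)⁻¹` is `1` unless `d l = 0`. -/
theorem integral_cdKernel_mul (hint : ∀ k l, Integrable (fun x => P k x * P l x) μ)
    (horth : ∀ k l, ∫ x, P k x * P l x ∂μ = if k = l then (d k)⁻¹ else 0)
    (k l : ℕ) (y : ℝ) :
    ∫ x, cdKernel P d k y x * P l x ∂μ = if l ≤ k then d l * (d l)⁻¹ * P l y else 0 := by
  simp_rw [cdKernel_mul]
  rw [integral_finsetSum _ fun i _ => (hint i l).const_mul _]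
  simp only [integral_const_mul, horth, mul_ite, mul_zero]
  rw [sum_ite_eq']
  exact if_congr (by rw [mem_range, Nat.lt_succ_iff]) (by ring) rfl

theorem cdKernel_mul_self (k : ℕ) (y x : ℝ) :
    cdKernel P d k y x * cdKernel P d k y x =
      ∑ i ∈ range (k + 1), d i * P i y * (cdKernel P d k y x * P i x) := by
  rw [cdKernel_mul]
  exact sum_congr rfl fun i _ => by rw [mul_comm (P i x)]

theorem integrable_cdKernel_mul_self (hint : ∀ k l, Integrable (fun x => P k x * P l x) μ)
    (k : ℕ) (y : ℝ) :
    Integrable (fun x => cdKernel P d k y x * cdKernel P d k y x) μ := by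
  simp_rw [cdKernel_mul_self]
  exact integrable_finsetSum _ fun i _ => (integrable_cdKernel_mul hint k i y).const_mul _

theorem integral_cdKernel_mul_self (hint : ∀ k l, Integrable (fun x => P k x * P l x) μ)
    (horth : ∀ k l, ∫ x, P k x * P l x ∂μ = if k = l then (d k)⁻¹ else 0)
    (k : ℕ) (y : ℝ) :
    ∫ x, cdKernel P d k y x * cdKernel P d k y x ∂μ = ∑ i ∈ range (k + 1), d i * P i y ^ 2 := by
  simp_rw [cdKernel_mul_self]
  rw [integral_finsetSum _ fun i _ => (integrable_cdKernel_mul hint k i y).const_mul _]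
  refine sum_congr rfl fun i hi => ?_
  rw [integral_const_mul, integral_cdKernel_mul hint horth,
    if_pos (Nat.lt_succ_iff.mp (mem_range.mp hi))]
  calc d i * P i y * (d i * (d i)⁻¹ * P i y) = d i * d i * (d i)⁻¹ * P i y ^ 2 := by ring
    _ = d i * P i y ^ 2 := by rw [mul_self_mul_inv]

theorem cdKernel_mul_cdNumerator (k : ℕ) (y x : ℝ) :
    cdKernel P d k y x * cdNumerator P k y x =
      P k y * (cdKernel P d k y x * P (k + 1) x) - P (k + 1) y * (cdKernel P d k y x * P k x) := by
  rw [cdNumerator]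
  ring

theorem integrable_cdKernel_mul_cdNumerator
    (hint : ∀ k l, Integrable (fun x => P k x * P l x) μ) (k : ℕ) (y : ℝ) :
    Integrable (fun x => cdKernel P d k y x * cdNumerator P k y x) μ := by
  simp_rw [cdKernel_mul_cdNumerator]
  exact ((integrable_cdKernel_mul hint k (k + 1) y).const_mul _).sub
    ((integrable_cdKernel_mul hint k k y).const_mul _)

theorem mul_integral_cdKernel_mul_cdNumerator
    (hint : ∀ k l, Integrable (fun x => P k x * P l x) μ)
    (horth : ∀ k l, ∫ x, P k x * P l x ∂μ = if k = l then (d k)⁻¹ else 0)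
    (k : ℕ) (y : ℝ) :
    d k * ∫ x, cdKernel P d k y x * cdNumerator P k y x ∂μ = d k * -(P k y * P (k + 1) y) := by
  simp_rw [cdKernel_mul_cdNumerator]
  rw [integral_sub ((integrable_cdKernel_mul hint k (k + 1) y).const_mul _)
      ((integrable_cdKernel_mul hint k k y).const_mul _),
    integral_const_mul, integral_const_mul, integral_cdKernel_mul hint horth,
    integral_cdKernel_mul hint horth, if_neg (Nat.not_succ_le_self k), if_pos le_rfl]
  calc d k * (P k y * 0 - P (k + 1) y * (d k * (d k)⁻¹ * P k y))
      = -(d k * d k * (d k)⁻¹ * (P k y * P (k + 1) y)) := by ring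
    _ = d k * -(P k y * P (k + 1) y) := by rw [mul_self_mul_inv]; ring

end Orthogonal

theorem stmt15_general (μ : Measure ℝ) [IsProbabilityMeasure μ]
    (P : ℕ → ℝ → ℝ) (d a : ℕ → ℝ)
    (hint : ∀ k l, Integrable (fun x => P k x * P l x) μ)
    (horth : ∀ k l, ∫ x, P k x * P l x ∂μ = if k = l then (d k)⁻¹ else 0)
    (m : ℕ) (kk : Fin m → ℕ) (y : Fin m → ℝ) :
    (∫ x : Fin m → ℝ,
        (∏ j, ∑ i ∈ Finset.range (kk j + 1), d i * P i (x j) * P i (y j)) *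
          (∑ t, d (kk t) * a (kk t) *
            (P (kk t + 1) (x t) * P (kk t) (y t) - P (kk t) (x t) * P (kk t + 1) (y t)) *
            ∏ j ∈ Finset.univ.erase t,
              ∑ i ∈ Finset.range (kk j + 1), d i * P i (x j) * P i (y j))
        ∂(Measure.pi fun _ : Fin m => μ)) =
      ∑ t, d (kk t) * a (kk t) * (-(P (kk t) (y t) * P (kk t + 1) (y t))) *
        ∏ j ∈ Finset.univ.erase t,
          ∑ i ∈ Finset.range (kk j + 1), d i * (P i (y j)) ^ 2 := by
  refine (integral_prod_mul_sum_mul_prod_erase μ (fun j => cdKernel P d (kk j) (y j))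
    (fun t => cdNumerator P (kk t) (y t)) (fun t => d (kk t) * a (kk t))
    (fun j => integrable_cdKernel_mul_self hint (kk j) (y j))
    (fun t => integrable_cdKernel_mul_cdNumerator hint (kk t) (y t))).trans
    (sum_congr rfl fun t _ => ?_)
  simp only [integral_cdKernel_mul_self hint horth]
  rw [mul_right_comm (d (kk t)), mul_integral_cdKernel_mul_cdNumerator hint horth,
    mul_right_comm (d (kk t))]

/-- Computation of `f₀ = [K_k(·,y) N_k(·,y), 1]` for the product Christoffel–Darboux
kernel `K_k` and its numerator `N_k`, under the product orthogonality measure: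
`f₀ = ∑_t d_{k_t} a_{k_t} (−P_{k_t}(y_t) P_{k_t+1}(y_t)) ∏_{j≠t} ∑_{i≤k_j} d_i P_i(y_j)²`. -/
theorem stmt15 (μ : Measure ℝ) [IsProbabilityMeasure μ]
    (P : ℕ → ℝ → ℝ) (d a : ℕ → ℝ)
    (hmeas : ∀ k, Measurable (P k))
    (hint : ∀ k l, Integrable (fun x => P k x * P l x) μ)
    (horth : ∀ k l, ∫ x, P k x * P l x ∂μ = if k = l then (d k)⁻¹ else 0)
    (m : ℕ) (kk : Fin m → ℕ) (y : Fin m → ℝ)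
    (hy1 : ∀ t : Fin m, ∀ i ≤ kk t, 0 ≤ P i (y t))
    (hy2 : ∀ t : Fin m, P (kk t + 1) (y t) ≤ 0) :
    (∫ x : Fin m → ℝ,
        (∏ j, ∑ i ∈ Finset.range (kk j + 1), d i * P i (x j) * P i (y j)) *
          (∑ t, d (kk t) * a (kk t) *
            (P (kk t + 1) (x t) * P (kk t) (y t) - P (kk t) (x t) * P (kk t + 1) (y t)) *
            ∏ j ∈ Finset.univ.erase t,
              ∑ i ∈ Finset.range (kk j + 1), d i * P i (x j) * P i (y j))
        ∂(Measure.pi fun _ : Fin m => μ)) =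
      ∑ t, d (kk t) * a (kk t) * (-(P (kk t) (y t) * P (kk t + 1) (y t))) *
        ∏ j ∈ Finset.univ.erase t,
          ∑ i ∈ Finset.range (kk j + 1), d i * (P i (y j)) ^ 2 :=
  stmt15_general μ P d a hint horth m kk y
end

section
/- Let C be a finite set of lines in K^n (K = ℝ or ℂ), i.e., C ⊆ P^{n-1}(K), such that for all distinct p, q ∈ C, cos²θ(p,q) = |⟨e_p, e_q⟩|² ≤ t (where e_p, e_q are unit vectors spanning p, q) with t < 1/n. Then |C| ≤ (1 − t)/(1/n − t). -/
/-!
Send each line `p` to its orthogonal projection `π_p = e_p e_pᴴ`, viewed as a vector of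
`K^{n×n}` with the Hilbert–Schmidt inner product. Then `⟪π_p, π_q⟫ = cos²θ(p,q)`,
`⟪I, π_p⟫ = 1` and `‖I‖² = n`, so Cauchy–Schwarz against the identity gives
`|C|² = |⟪I, ∑ π_p⟫|² ≤ n ‖∑ π_p‖² ≤ n (|C| + t |C| (|C| - 1))`, which rearranges to the bound
when `t < 1/n`.
-/

open Finset
open scoped ComplexConjugate InnerProductSpace

section Gram

variable {𝕜 E ι : Type*} [RCLike 𝕜] [NormedAddCommGroup E] [InnerProductSpace 𝕜 E]

theorem norm_sum_sq_eq_sum_sum_re_inner (s : Finset ι) (u : ι → E) :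
    ‖∑ p ∈ s, u p‖ ^ 2 = ∑ p ∈ s, ∑ q ∈ s, RCLike.re ⟪u p, u q⟫_𝕜 := by
  rw [norm_sq_eq_re_inner (𝕜 := 𝕜), sum_inner, map_sum]
  exact sum_congr rfl fun p _ => by rw [inner_sum, map_sum]

theorem card_sq_le_norm_sq_mul_norm_sum_sq {s : Finset ι} {u : ι → E} {w : E}
    (hw : ∀ p ∈ s, ⟪w, u p⟫_𝕜 = 1) : (#s : ℝ) ^ 2 ≤ ‖w‖ ^ 2 * ‖∑ p ∈ s, u p‖ ^ 2 := by
  have hsum : ⟪w, ∑ p ∈ s, u p⟫_𝕜 = #s := by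
    rw [inner_sum, sum_congr rfl hw, sum_const, nsmul_one]
  calc (#s : ℝ) ^ 2 = ‖⟪w, ∑ p ∈ s, u p⟫_𝕜‖ ^ 2 := by rw [hsum, RCLike.norm_natCast]
    _ ≤ (‖w‖ * ‖∑ p ∈ s, u p‖) ^ 2 := by gcongr; exact norm_inner_le_norm _ _
    _ = ‖w‖ ^ 2 * ‖∑ p ∈ s, u p‖ ^ 2 := mul_pow ..

end Gram

theorem sum_sum_le_of_diag_eq_one_of_offDiag_le {ι : Type*} {s : Finset ι} {f : ι → ι → ℝ}
    {t : ℝ} (hdiag : ∀ p ∈ s, f p p = 1) (hoff : ∀ p ∈ s, ∀ q ∈ s, p ≠ q → f p q ≤ t) :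
    ∑ p ∈ s, ∑ q ∈ s, f p q ≤ #s * (1 + t * (#s - 1)) := by
  classical
  have hrow : ∀ p ∈ s, ∑ q ∈ s, f p q ≤ 1 + t * (#s - 1) := by
    intro p hp
    have hoff' : ∀ q ∈ s.erase p, f p q ≤ t := fun q hq =>
      hoff p hp q (mem_of_mem_erase hq) (ne_of_mem_erase hq).symm
    calc ∑ q ∈ s, f p q = f p p + ∑ q ∈ s.erase p, f p q := (add_sum_erase s _ hp).symm
      _ ≤ 1 + #(s.erase p) * t := by
        rw [hdiag p hp, ← nsmul_eq_mul]; gcongr; exact sum_le_card_nsmul _ _ _ hoff'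
      _ = 1 + t * (#s - 1) := by
        rw [card_erase_of_mem hp, Nat.cast_pred (card_pos.2 ⟨p, hp⟩), mul_comm]
  simpa only [nsmul_eq_mul] using sum_le_card_nsmul s _ _ hrow

theorem le_div_of_sq_le_mul {N n t : ℝ} (hn : 1 ≤ n) (ht : t < 1 / n) (hN : 0 ≤ N)
    (h : N ^ 2 ≤ n * (N * (1 + t * (N - 1)))) : N ≤ (1 - t) / (1 / n - t) := by
  rw [le_div_iff₀ (sub_pos.2 ht)]
  rcases hN.eq_or_lt with rfl | hN
  · have : 1 / n ≤ 1 := div_le_one_of_le₀ hn (by linarith)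
    linarith
  · have h' : N ≤ n * (1 + t * (N - 1)) := by nlinarith
    have hn0 : 0 < n := by linarith
    rw [mul_sub, mul_one_div, div_sub' hn0.ne', div_le_iff₀ hn0]
    nlinarith

section OuterSelf

variable {K ι : Type*} [RCLike K] [Fintype ι]

/-- The matrix `(conj eᵢ · eⱼ)ᵢⱼ`, the transpose of the projection `e eᴴ`, flattened so that the
Euclidean inner product becomes the Hilbert–Schmidt inner product. -/
def outerSelf (e : EuclideanSpace K ι) : EuclideanSpace K (ι × ι) :=
  WithLp.toLp 2 fun ij => conj (e ij.1) * e ij.2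

theorem inner_outerSelf (e f : EuclideanSpace K ι) :
    ⟪outerSelf e, outerSelf f⟫_K = ((‖⟪e, f⟫_K‖ ^ 2 : ℝ) : K) := by
  rw [RCLike.ofReal_pow, ← RCLike.conj_mul]
  simp only [outerSelf, PiLp.inner_apply, RCLike.inner_apply, map_sum, map_mul,
    RCLike.conj_conj, Fintype.sum_prod_type, sum_mul_sum]
  refine sum_congr rfl fun i _ => sum_congr rfl fun j _ => by ring

theorem norm_outerSelf (e : EuclideanSpace K ι) : ‖outerSelf e‖ = ‖e‖ ^ 2 := by
  have h : ‖outerSelf e‖ ^ 2 = (‖e‖ ^ 2) ^ 2 := by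
    rw [norm_sq_eq_re_inner (𝕜 := K), inner_outerSelf, RCLike.ofReal_re,
      inner_self_eq_norm_sq_to_K, norm_pow, RCLike.norm_ofReal, abs_norm]
  exact (sq_eq_sq₀ (norm_nonneg _) (by positivity)).1 h

variable [DecidableEq ι]

def diagOne : EuclideanSpace K (ι × ι) :=
  WithLp.toLp 2 fun ij => if ij.1 = ij.2 then 1 else 0

theorem inner_diagOne_outerSelf (e : EuclideanSpace K ι) :
    ⟪diagOne, outerSelf e⟫_K = (‖e‖ : K) ^ 2 := by
  rw [← inner_self_eq_norm_sq_to_K]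
  simp only [diagOne, outerSelf, PiLp.inner_apply, RCLike.inner_apply, Fintype.sum_prod_type,
    apply_ite (starRingEnd K), map_one, map_zero, mul_ite, mul_one, mul_zero, sum_ite_eq,
    mem_univ, if_true]
  exact sum_congr rfl fun i _ => mul_comm _ _

theorem norm_diagOne_sq : ‖(diagOne : EuclideanSpace K (ι × ι))‖ ^ 2 = Fintype.card ι := by
  simp only [EuclideanSpace.norm_sq_eq, diagOne, Fintype.sum_prod_type]
  simp [apply_ite]

end OuterSelf

theorem Submodule.exists_mem_norm_eq_one {K E : Type*} [RCLike K] [NormedAddCommGroup E]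
    [NormedSpace K E] {p : Submodule K E} (hp : p ≠ ⊥) : ∃ e ∈ p, ‖e‖ = 1 := by
  obtain ⟨x, hx, hx0⟩ := Submodule.exists_mem_ne_zero_of_ne_bot hp
  exact ⟨(‖x‖⁻¹ : K) • x, p.smul_mem _ hx, norm_smul_inv_norm hx0⟩

/-- Degree-1 LP bound for projective codes: a finite set of lines in `Kⁿ` (`K = ℝ` or
`ℂ`) with `cos²θ(p,q) ≤ t < 1/n` for distinct lines satisfies
`|C| ≤ (1 - t)/(1/n - t)`. -/
theorem stmt17 {K : Type*} [RCLike K] (n : ℕ) (hn : 0 < n) (t : ℝ) (ht : t < 1 / n)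
    (C : Finset (Submodule K (EuclideanSpace K (Fin n))))
    (hdim : ∀ p ∈ C, Module.finrank K p = 1)
    (hang : ∀ p ∈ C, ∀ q ∈ C, p ≠ q →
      ∀ e : EuclideanSpace K (Fin n), e ∈ p → ‖e‖ = 1 →
      ∀ f : EuclideanSpace K (Fin n), f ∈ q → ‖f‖ = 1 →
        ‖(inner K e f : K)‖ ^ 2 ≤ t) :
    (C.card : ℝ) ≤ (1 - t) / (1 / n - t) := by
  have hunit : ∀ p ∈ C, ∃ e ∈ p, ‖e‖ = 1 := fun p hp =>
    Submodule.exists_mem_norm_eq_one (Submodule.one_le_finrank_iff.mp (hdim p hp).ge)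
  choose! e he_mem he_norm using hunit
  have hw : ∀ p ∈ C, ⟪diagOne, outerSelf (e p)⟫_K = 1 := fun p hp => by
    rw [inner_diagOne_outerSelf, he_norm p hp, RCLike.ofReal_one, one_pow]
  have hgram : ∑ p ∈ C, ∑ q ∈ C, RCLike.re ⟪outerSelf (e p), outerSelf (e q)⟫_K
      ≤ #C * (1 + t * (#C - 1)) := by
    refine sum_sum_le_of_diag_eq_one_of_offDiag_le (fun p hp => ?_) fun p hp q hq hpq => ?_
    · simp [norm_outerSelf, he_norm p hp]
    · simpa [inner_outerSelf] using
        hang p hp q hq hpq _ (he_mem p hp) (he_norm p hp) _ (he_mem q hq) (he_norm q hq)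
  have hcs := card_sq_le_norm_sq_mul_norm_sum_sq hw
  rw [norm_diagOne_sq, Fintype.card_fin, norm_sum_sq_eq_sum_sum_re_inner (𝕜 := K)] at hcs
  exact le_div_of_sq_le_mul (by exact_mod_cast hn) ht (Nat.cast_nonneg _) (hcs.trans (by gcongr))
end
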